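/- Let X ∈ ℝ^{d×n} with n ≥ 1, λ > 0, μ > 0, 0 < p, q < 2, and let (Z_t)_{t≥1} be a sequence in ℝ^{n×n} such that for every t, p·Z_{t+1}M_t + λq·Xᵀ(XZ_{t+1} − X)N_t = 0, where M_t = (Z_tᵀZ_t + μ²I)^{p/2−1} and N_t is the diagonal matrix with (N_t)_{ii} = (‖(XZ_t − X)_i‖_2² + μ²)^{q/2−1}. Set D = J(Z_1, μ) and θ = min{ D^{(p−2)/p}, (D/λ)^{(q−2)/q} } > 0. Then for every t, J(Z_t, μ) − J(Z_{t+1}, μ) ≥ (θ/2)·( p‖Z_t − Z_{t+1}‖_F² + λq‖X(Z_t − Z_{t+1})‖_F² ). -/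

import Mathlib

/-!
Both parts of `J` are traces of concave functions of a matrix built from `Z`: `x ↦ x ^ (p/2)` of
`ZᵀZ + μ²I`, and `x ↦ x ^ (q/2)` of the squared column residuals. Klein's trace inequality
therefore bounds `J(Z_t) - J(Z_{t+1})` below by the linearisation of `J` at `Z_t`. Expanding it
around `Z_{t+1}` with `Δ = Z_t - Z_{t+1}`, the cross terms are exactly the update equation paired
with `Δ`, so they cancel, and what remains is
`(p/2) Tr(ΔᵀΔ M_t) + (λq/2) Tr((XΔ)ᵀ(XΔ) N_t)`.
As long as `J(Z_t) ≤ D`, every eigenvalue of `M_t` and `N_t` is at least `θ`, because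
`x ↦ x ^ (s - 1)` is decreasing; and `J(Z_t) ≤ D` holds for all `t` by induction, since `J`
decreases along the iteration.
-/

open Matrix

/-- Real power of a real symmetric matrix, defined through the spectral decomposition
`A = U · diag(λ₁,…,λₙ) · Uᵀ` as `A^r = U · diag(λ₁^r,…,λₙ^r) · Uᵀ`
(junk value `0` if `A` is not symmetric). -/
noncomputable def mpow {n : ℕ} (A : Matrix (Fin n) (Fin n) ℝ) (r : ℝ) :
    Matrix (Fin n) (Fin n) ℝ :=
  if hA : A.IsHermitian then hA.cfc (fun x : ℝ => x ^ r) else 0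

/-- The smoothed LRR objective
`J(Z, μ) = Tr((ZᵀZ + μ²I)^{p/2}) + λ·∑ᵢ (‖(XZ − X)ᵢ‖₂² + μ²)^{q/2}`,
where `(XZ − X)ᵢ` denotes the `i`-th column of `XZ − X`. -/
noncomputable def smoothJ {d n : ℕ} (X : Matrix (Fin d) (Fin n) ℝ) (lam p q : ℝ)
    (Z : Matrix (Fin n) (Fin n) ℝ) (μ : ℝ) : ℝ :=
  (mpow (Zᵀ * Z + μ ^ 2 • (1 : Matrix (Fin n) (Fin n) ℝ)) (p / 2)).trace +
    lam * ∑ i, (∑ j, ((X * Z - X) j i) ^ 2 + μ ^ 2) ^ (q / 2)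

namespace Matrix

variable {m ι R : Type*} [Fintype m] [Fintype ι] [CommRing R]

lemma transpose_mul_diagonal_mul_apply_self [DecidableEq ι] (W : Matrix ι ι R) (β : ι → R)
    (i : ι) :
    (Wᵀ * diagonal β * W) i i = ∑ j, W j i ^ 2 * β j := by
  rw [Matrix.mul_assoc, mul_apply]
  simp only [diagonal_mul, transpose_apply]
  exact Finset.sum_congr rfl fun j _ => by ring

lemma sum_sq_apply_eq_one_of_mul_transpose [DecidableEq ι] {W : Matrix ι ι R}
    (hW : W * Wᵀ = 1) (j : ι) : ∑ i, W j i ^ 2 = 1 := by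
  simpa [mul_apply, sq] using congrFun (congrFun hW j) j

lemma trace_transpose_mul_self (P : Matrix m ι R) :
    (Pᵀ * P).trace = ∑ i, ∑ j, P i j ^ 2 := by
  rw [trace_mul_comm]
  simp [trace, mul_apply, sq]

lemma trace_mul_diagonal [DecidableEq ι] (C : Matrix ι ι R) (w : ι → R) :
    (C * diagonal w).trace = ∑ i, C i i * w i := by
  simp [trace, mul_diagonal]

lemma trace_sub_transpose_mul_self_mul (P₀ P₁ : Matrix m ι R) {M : Matrix ι ι R}
    (hM : Mᵀ = M) :
    ((P₀ᵀ * P₀ - P₁ᵀ * P₁) * M).trace =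
      ((P₀ - P₁)ᵀ * (P₀ - P₁) * M).trace + 2 * ((P₁ * M)ᵀ * (P₀ - P₁)).trace := by
  have hsplit : P₀ᵀ * P₀ - P₁ᵀ * P₁ =
      (P₀ - P₁)ᵀ * (P₀ - P₁) + (P₀ - P₁)ᵀ * P₁ + P₁ᵀ * (P₀ - P₁) := by
    simp only [transpose_sub, Matrix.sub_mul, Matrix.mul_sub]
    abel
  have hcross₁ : ((P₀ - P₁)ᵀ * P₁ * M).trace = ((P₁ * M)ᵀ * (P₀ - P₁)).trace := by
    rw [← trace_transpose]
    simp only [transpose_mul, transpose_transpose, hM, Matrix.mul_assoc]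
  have hcross₂ : (P₁ᵀ * (P₀ - P₁) * M).trace = ((P₁ * M)ᵀ * (P₀ - P₁)).trace := by
    rw [trace_mul_cycle, transpose_mul, hM, Matrix.mul_assoc]
  rw [hsplit, Matrix.add_mul, Matrix.add_mul, trace_add, trace_add, hcross₁, hcross₂]
  ring

lemma posSemidef_transpose_mul_self (P : Matrix m ι ℝ) : (Pᵀ * P).PosSemidef := by
  rw [← conjTranspose_eq_transpose_of_trivial]
  exact posSemidef_conjTranspose_mul_self P

lemma mul_trace_le_trace_mul_diagonal [DecidableEq ι] {C : Matrix ι ι ℝ} (hC : C.PosSemidef)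
    {w : ι → ℝ} {θ : ℝ} (hw : ∀ i, θ ≤ w i) :
    θ * C.trace ≤ (C * diagonal w).trace := by
  rw [trace_mul_diagonal, trace, Finset.mul_sum]
  exact Finset.sum_le_sum fun i _ => by
    rw [mul_comm]; exact mul_le_mul_of_nonneg_left (hw i) hC.diag_nonneg

end Matrix

namespace Matrix.IsHermitian

variable {ι : Type*} [Fintype ι] [DecidableEq ι] {A B : Matrix ι ι ℝ}

lemma cfc_eq_mul_diagonal_mul (hA : A.IsHermitian) (f : ℝ → ℝ) :
    hA.cfc f = (hA.eigenvectorUnitary : Matrix ι ι ℝ) * diagonal (f ∘ hA.eigenvalues) *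
      star (hA.eigenvectorUnitary : Matrix ι ι ℝ) :=
  rfl

lemma star_mul_mul_eigenvectorUnitary (hA : A.IsHermitian) :
    star (hA.eigenvectorUnitary : Matrix ι ι ℝ) * A * hA.eigenvectorUnitary =
      diagonal hA.eigenvalues := by
  simpa using hA.conjStarAlgAut_star_eigenvectorUnitary

lemma eq_mul_diagonal_mul (hA : A.IsHermitian) :
    A = (hA.eigenvectorUnitary : Matrix ι ι ℝ) * diagonal hA.eigenvalues *
      star (hA.eigenvectorUnitary : Matrix ι ι ℝ) :=
  hA.spectral_theorem

lemma trace_mul_cfc (hA : A.IsHermitian) (B : Matrix ι ι ℝ) (f : ℝ → ℝ) :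
    (B * hA.cfc f).trace =
      ∑ i, (star (hA.eigenvectorUnitary : Matrix ι ι ℝ) * B * hA.eigenvectorUnitary) i i *
        f (hA.eigenvalues i) := by
  rw [cfc_eq_mul_diagonal_mul, ← Matrix.mul_assoc, ← Matrix.mul_assoc, trace_mul_comm,
    ← Matrix.mul_assoc, ← Matrix.mul_assoc]
  simp [trace, mul_diagonal]

lemma trace_cfc (hA : A.IsHermitian) (f : ℝ → ℝ) :
    (hA.cfc f).trace = ∑ i, f (hA.eigenvalues i) := by
  simpa using hA.trace_mul_cfc 1 f

lemma transpose_cfc (hA : A.IsHermitian) (f : ℝ → ℝ) : (hA.cfc f)ᵀ = hA.cfc f := by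
  rw [← conjTranspose_eq_transpose_of_trivial]
  simp [cfc_eq_mul_diagonal_mul, star_eq_conjTranspose, Matrix.mul_assoc]

lemma cfc_const_mul (hA : A.IsHermitian) (c : ℝ) (f : ℝ → ℝ) :
    hA.cfc (fun x => c * f x) = c • hA.cfc f := by
  simp only [cfc_eq_mul_diagonal_mul]
  rw [show diagonal ((fun x => c * f x) ∘ hA.eigenvalues) =
      c • diagonal (f ∘ hA.eigenvalues) by rw [← diagonal_smul]; rfl,
    Matrix.mul_smul, Matrix.smul_mul]

lemma mul_trace_le_trace_mul_cfc (hA : A.IsHermitian) {C : Matrix ι ι ℝ} (hC : C.PosSemidef)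
    {g : ℝ → ℝ} {θ : ℝ} (hg : ∀ i, θ ≤ g (hA.eigenvalues i)) :
    θ * C.trace ≤ (C * hA.cfc g).trace := by
  set U := (hA.eigenvectorUnitary : Matrix ι ι ℝ)
  have hUC : (star U * C * U).PosSemidef := by
    rw [star_eq_conjTranspose]; exact hC.conjTranspose_mul_mul_same U
  have htr : (star U * C * U).trace = C.trace := by
    rw [Matrix.mul_assoc, trace_mul_comm, Matrix.mul_assoc,
      Unitary.mul_star_self_of_mem hA.eigenvectorUnitary.2, Matrix.mul_one]
  rw [trace_mul_cfc, ← htr, trace, Finset.mul_sum]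
  exact Finset.sum_le_sum fun i _ => by
    rw [mul_comm]; exact mul_le_mul_of_nonneg_left (hg i) hUC.diag_nonneg

theorem trace_cfc_le_of_tangent (hA : A.IsHermitian) (hB : B.IsHermitian) (f g : ℝ → ℝ)
    (h : ∀ i j, f (hB.eigenvalues j) ≤ f (hA.eigenvalues i) +
      g (hA.eigenvalues i) * (hB.eigenvalues j - hA.eigenvalues i)) :
    (hB.cfc f).trace ≤ (hA.cfc f).trace + ((B - A) * hA.cfc g).trace := by
  rw [trace_cfc, trace_cfc, trace_mul_cfc]
  set U := (hA.eigenvectorUnitary : Matrix ι ι ℝ)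
  set α := hA.eigenvalues
  set β := hB.eigenvalues
  -- the squared overlaps `W j i ^ 2` of the two eigenbases form a doubly stochastic matrix
  set W := star (hB.eigenvectorUnitary : Matrix ι ι ℝ) * U with hWdef
  have hW : W ∈ unitaryGroup ι ℝ :=
    Submonoid.mul_mem _ (Unitary.star_mem hB.eigenvectorUnitary.2) hA.eigenvectorUnitary.2
  have hWt : star W = Wᵀ := by
    rw [star_eq_conjTranspose, conjTranspose_eq_transpose_of_trivial]
  have hrow := sum_sq_apply_eq_one_of_mul_transpose (hWt ▸ Unitary.mul_star_self_of_mem hW)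
  have hcol := sum_sq_apply_eq_one_of_mul_transpose (W := Wᵀ)
    (by rw [transpose_transpose, ← hWt, Unitary.star_mul_self_of_mem hW])
  simp only [transpose_apply] at hcol
  have hBU : ∀ i, (star U * B * U) i i = ∑ j, W j i ^ 2 * β j := fun i => by
    rw [← transpose_mul_diagonal_mul_apply_self, ← hWt, hB.eq_mul_diagonal_mul, hWdef]
    simp only [StarMul.star_mul, star_star, Matrix.mul_assoc]
    rfl
  have hAU : ∀ i, (star U * A * U) i i = α i := fun i => by
    rw [hA.star_mul_mul_eigenvectorUnitary, diagonal_apply_eq]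
  have hexpand : ∀ i, ∑ j, W j i ^ 2 * (f (α i) + g (α i) * (β j - α i)) =
      f (α i) + ((star U * B * U) i i - α i) * g (α i) := fun i => by
    have : ∑ j, W j i ^ 2 * (f (α i) + g (α i) * (β j - α i)) =
        (∑ j, W j i ^ 2) * (f (α i) - g (α i) * α i) + g (α i) * ∑ j, W j i ^ 2 * β j := by
      rw [Finset.sum_mul, Finset.mul_sum, ← Finset.sum_add_distrib]
      exact Finset.sum_congr rfl fun j _ => by ring
    rw [this, hcol, hBU]
    ring
  calc ∑ j, f (β j) = ∑ j, ∑ i, W j i ^ 2 * f (β j) := by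
        simp only [← Finset.sum_mul, hrow, one_mul]
    _ ≤ ∑ j, ∑ i, W j i ^ 2 * (f (α i) + g (α i) * (β j - α i)) := by
        gcongr with j _ i _
        exact h i j
    _ = ∑ i, (f (α i) + ((star U * B * U) i i - α i) * g (α i)) := by
        rw [Finset.sum_comm]
        exact Finset.sum_congr rfl fun i _ => hexpand i
    _ = ∑ i, f (α i) + ∑ i, (star U * (B - A) * U) i i * g (α i) := by
        simp only [Matrix.mul_sub, Matrix.sub_mul, sub_apply, hAU, Finset.sum_add_distrib]

end Matrix.IsHermitian

namespace Real

lemma rpow_le_rpow_add_mul_sub {s a b : ℝ} (hs0 : 0 ≤ s) (hs1 : s ≤ 1) (ha : 0 < a)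
    (hb : 0 ≤ b) : b ^ s ≤ a ^ s + s * a ^ (s - 1) * (b - a) := by
  have hamgm := geom_mean_le_arith_mean2_weighted hs0 (sub_nonneg.2 hs1) hb ha.le (by ring)
  have hone : a ^ (1 - s) * a ^ (s - 1) = 1 := by rw [← rpow_add ha]; simp
  calc b ^ s = b ^ s * a ^ (1 - s) * a ^ (s - 1) := by rw [mul_assoc, hone, mul_one]
    _ ≤ (s * b + (1 - s) * a) * a ^ (s - 1) := by gcongr
    _ = a ^ s + s * a ^ (s - 1) * (b - a) := by
        rw [rpow_sub_one ha.ne']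
        field_simp
        ring

lemma rpow_sub_one_div_le_rpow_sub_one_of_rpow_le {s x D : ℝ} (hs0 : 0 < s) (hs1 : s ≤ 1)
    (hx : 0 < x) (hxD : x ^ s ≤ D) : D ^ ((s - 1) / s) ≤ x ^ (s - 1) := by
  rw [show x ^ (s - 1) = (x ^ s) ^ ((s - 1) / s) by
    rw [← rpow_mul hx.le, mul_div_cancel₀ _ hs0.ne']]
  exact rpow_le_rpow_of_nonpos (rpow_pos_of_pos hx s) hxD
    (div_nonpos_of_nonpos_of_nonneg (by linarith) hs0.le)

end Real

section mpow

variable {n : ℕ} {A B : Matrix (Fin n) (Fin n) ℝ}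

lemma Matrix.IsHermitian.mpow_eq (hA : A.IsHermitian) (r : ℝ) : mpow A r = hA.cfc (· ^ r) :=
  dif_pos hA

theorem Matrix.PosDef.trace_mpow_le_trace_mpow_add {s : ℝ} (hs0 : 0 ≤ s) (hs1 : s ≤ 1)
    (hA : A.PosDef) (hB : B.PosSemidef) :
    (mpow B s).trace ≤ (mpow A s).trace + s * ((B - A) * mpow A (s - 1)).trace := by
  have hklein := hA.isHermitian.trace_cfc_le_of_tangent hB.isHermitian (· ^ s)
    (fun x => s * x ^ (s - 1))
    fun i j => Real.rpow_le_rpow_add_mul_sub hs0 hs1 (hA.eigenvalues_pos i)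
      (hB.eigenvalues_nonneg j)
  rwa [hA.isHermitian.cfc_const_mul, Matrix.mul_smul, trace_smul, smul_eq_mul,
    ← hA.isHermitian.mpow_eq, ← hA.isHermitian.mpow_eq, ← hB.isHermitian.mpow_eq] at hklein

end mpow

section LRR

variable {d n : ℕ} (X : Matrix (Fin d) (Fin n) ℝ) {μ : ℝ}

/- `regGram Z μ = ZᵀZ + μ²I` and `regResidualSq X Z μ i = ‖(XZ − X)ᵢ‖² + μ²` are the arguments of
the two powers in `J`; the matrices `M_t` and `N_t` of the update are their `(p/2 − 1)`-th and
`(q/2 − 1)`-th powers at `Z_t`. -/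
def regGram (Z : Matrix (Fin n) (Fin n) ℝ) (μ : ℝ) : Matrix (Fin n) (Fin n) ℝ :=
  Zᵀ * Z + μ ^ 2 • (1 : Matrix (Fin n) (Fin n) ℝ)

def regResidualSq (Z : Matrix (Fin n) (Fin n) ℝ) (μ : ℝ) (i : Fin n) : ℝ :=
  ∑ j, ((X * Z - X) j i) ^ 2 + μ ^ 2

lemma smoothJ_eq (lam p q : ℝ) (Z : Matrix (Fin n) (Fin n) ℝ) :
    smoothJ X lam p q Z μ =
      (mpow (regGram Z μ) (p / 2)).trace + lam * ∑ i, regResidualSq X Z μ i ^ (q / 2) :=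
  rfl

lemma regGram_posDef (hμ : μ ≠ 0) (Z : Matrix (Fin n) (Fin n) ℝ) : (regGram Z μ).PosDef :=
  PosDef.posSemidef_add (posSemidef_transpose_mul_self Z) (PosDef.one.smul (by positivity))

lemma regResidualSq_pos (hμ : μ ≠ 0) (Z : Matrix (Fin n) (Fin n) ℝ) (i : Fin n) :
    0 < regResidualSq X Z μ i := by
  unfold regResidualSq
  positivity

lemma regResidualSq_eq (Z : Matrix (Fin n) (Fin n) ℝ) (i : Fin n) :
    regResidualSq X Z μ i = ((X * Z - X)ᵀ * (X * Z - X)) i i + μ ^ 2 := by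
  rw [regResidualSq, mul_apply]
  simp only [transpose_apply, sq]

lemma trace_mpow_regGram_nonneg (hμ : μ ≠ 0) (Z : Matrix (Fin n) (Fin n) ℝ) (s : ℝ) :
    0 ≤ (mpow (regGram Z μ) s).trace := by
  have hA := regGram_posDef hμ Z
  rw [hA.isHermitian.mpow_eq, hA.isHermitian.trace_cfc]
  exact Finset.sum_nonneg fun i _ => Real.rpow_nonneg (hA.eigenvalues_pos i).le _

lemma smoothJ_pos (hn : 0 < n) {lam : ℝ} (hlam : 0 < lam) (hμ : μ ≠ 0) (p q : ℝ)
    (Z : Matrix (Fin n) (Fin n) ℝ) : 0 < smoothJ X lam p q Z μ := by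
  have : Nonempty (Fin n) := ⟨⟨0, hn⟩⟩
  have hres : 0 < ∑ i, regResidualSq X Z μ i ^ (q / 2) :=
    Finset.sum_pos (fun i _ => Real.rpow_pos_of_pos (regResidualSq_pos X hμ Z i) _)
      Finset.univ_nonempty
  rw [smoothJ_eq]
  have := trace_mpow_regGram_nonneg hμ Z (p / 2)
  positivity

theorem trace_mpow_regGram_sub_ge (hμ : μ ≠ 0) {s : ℝ} (hs0 : 0 ≤ s) (hs1 : s ≤ 1)
    (Z₀ Z₁ : Matrix (Fin n) (Fin n) ℝ) :
    s * ((Z₀ - Z₁)ᵀ * (Z₀ - Z₁) * mpow (regGram Z₀ μ) (s - 1)).trace +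
        2 * s * ((Z₁ * mpow (regGram Z₀ μ) (s - 1))ᵀ * (Z₀ - Z₁)).trace ≤
      (mpow (regGram Z₀ μ) s).trace - (mpow (regGram Z₁ μ) s).trace := by
  have hA := regGram_posDef hμ Z₀
  have hklein := hA.trace_mpow_le_trace_mpow_add hs0 hs1 (regGram_posDef hμ Z₁).posSemidef
  have hgram : regGram Z₁ μ - regGram Z₀ μ = -(Z₀ᵀ * Z₀ - Z₁ᵀ * Z₁) := by
    simp only [regGram]
    abel
  rw [hgram, neg_mul, trace_neg, trace_sub_transpose_mul_self_mul _ _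
    (by rw [hA.isHermitian.mpow_eq]; exact hA.isHermitian.transpose_cfc _)] at hklein
  linarith

theorem sum_regResidualSq_rpow_sub_ge (hμ : μ ≠ 0) {s : ℝ} (hs0 : 0 ≤ s) (hs1 : s ≤ 1)
    (Z₀ Z₁ : Matrix (Fin n) (Fin n) ℝ) :
    s * ((X * (Z₀ - Z₁))ᵀ * (X * (Z₀ - Z₁)) *
          diagonal fun i => regResidualSq X Z₀ μ i ^ (s - 1)).trace +
        2 * s * ((Xᵀ * ((X * Z₁ - X) *
          diagonal fun i => regResidualSq X Z₀ μ i ^ (s - 1)))ᵀ * (Z₀ - Z₁)).trace ≤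
      ∑ i, regResidualSq X Z₀ μ i ^ s - ∑ i, regResidualSq X Z₁ μ i ^ s := by
  set N := diagonal fun i => regResidualSq X Z₀ μ i ^ (s - 1)
  have hres : X * Z₀ - X - (X * Z₁ - X) = X * (Z₀ - Z₁) := by
    rw [Matrix.mul_sub]
    abel
  have hcross : (((X * Z₁ - X) * N)ᵀ * (X * (Z₀ - Z₁))).trace =
      ((Xᵀ * ((X * Z₁ - X) * N))ᵀ * (Z₀ - Z₁)).trace := by
    rw [transpose_mul Xᵀ, transpose_transpose, Matrix.mul_assoc]
  have hexpand := trace_sub_transpose_mul_self_mul (X * Z₀ - X) (X * Z₁ - X)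
    (M := N) (by simp [N])
  rw [hres, hcross] at hexpand
  calc _ = s * (((X * Z₀ - X)ᵀ * (X * Z₀ - X) - (X * Z₁ - X)ᵀ * (X * Z₁ - X)) *
          N).trace := by rw [hexpand]; ring
    _ = ∑ i, s * regResidualSq X Z₀ μ i ^ (s - 1) *
          (regResidualSq X Z₀ μ i - regResidualSq X Z₁ μ i) := by
        rw [trace_mul_diagonal, Finset.mul_sum]
        refine Finset.sum_congr rfl fun i _ => ?_
        rw [Matrix.sub_apply, regResidualSq_eq X Z₀, regResidualSq_eq X Z₁]
        ring
    _ ≤ ∑ i, (regResidualSq X Z₀ μ i ^ s - regResidualSq X Z₁ μ i ^ s) :=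
        Finset.sum_le_sum fun i _ => by
          have := Real.rpow_le_rpow_add_mul_sub hs0 hs1 (regResidualSq_pos X hμ Z₀ i)
            (regResidualSq_pos X hμ Z₁ i).le
          linarith
    _ = _ := Finset.sum_sub_distrib ..

variable {lam p q D θ : ℝ} {Z : Matrix (Fin n) (Fin n) ℝ}

lemma le_rpow_eigenvalues_regGram (hlam : 0 ≤ lam) (hμ : μ ≠ 0) (hp0 : 0 < p) (hp2 : p ≤ 2)
    (hJ : smoothJ X lam p q Z μ ≤ D) (hθ : θ ≤ D ^ ((p - 2) / p)) (i : Fin n) :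
    θ ≤ (regGram_posDef hμ Z).isHermitian.eigenvalues i ^ (p / 2 - 1) := by
  have hA := regGram_posDef hμ Z
  have hres : 0 ≤ lam * ∑ i, regResidualSq X Z μ i ^ (q / 2) :=
    mul_nonneg hlam <| Finset.sum_nonneg fun i _ =>
      Real.rpow_nonneg (regResidualSq_pos X hμ Z i).le _
  have hD : hA.isHermitian.eigenvalues i ^ (p / 2) ≤ D := calc
    _ ≤ ∑ k, hA.isHermitian.eigenvalues k ^ (p / 2) :=
        Finset.single_le_sum (fun k _ => Real.rpow_nonneg (hA.eigenvalues_pos k).le _)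
          (Finset.mem_univ i)
    _ = (mpow (regGram Z μ) (p / 2)).trace := by
        rw [hA.isHermitian.mpow_eq, hA.isHermitian.trace_cfc]
    _ ≤ D := by rw [smoothJ_eq] at hJ; linarith
  have h := Real.rpow_sub_one_div_le_rpow_sub_one_of_rpow_le (by linarith) (by linarith)
    (hA.eigenvalues_pos i) hD
  rw [show (p / 2 - 1) / (p / 2) = (p - 2) / p by field_simp] at h
  exact hθ.trans h

lemma le_regResidualSq_rpow (hlam : 0 < lam) (hμ : μ ≠ 0) (hq0 : 0 < q) (hq2 : q ≤ 2)
    (hJ : smoothJ X lam p q Z μ ≤ D) (hθ : θ ≤ (D / lam) ^ ((q - 2) / q)) (i : Fin n) :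
    θ ≤ regResidualSq X Z μ i ^ (q / 2 - 1) := by
  have htr := trace_mpow_regGram_nonneg hμ Z (p / 2)
  have hD : regResidualSq X Z μ i ^ (q / 2) ≤ D / lam := by
    rw [le_div_iff₀ hlam]
    have hsingle := Finset.single_le_sum (f := fun k => regResidualSq X Z μ k ^ (q / 2))
      (fun k _ => Real.rpow_nonneg (regResidualSq_pos X hμ Z k).le _) (Finset.mem_univ i)
    have := mul_le_mul_of_nonneg_left hsingle hlam.le
    rw [smoothJ_eq] at hJ
    linarith
  have h := Real.rpow_sub_one_div_le_rpow_sub_one_of_rpow_le (by linarith) (by linarith)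
    (regResidualSq_pos X hμ Z i) hD
  rw [show (q / 2 - 1) / (q / 2) = (q - 2) / q by field_simp] at h
  exact hθ.trans h

theorem smoothJ_sub_smoothJ_ge (hlam : 0 < lam) (hμ : μ ≠ 0) (hp0 : 0 < p) (hp2 : p ≤ 2)
    (hq0 : 0 < q) (hq2 : q ≤ 2) {Z₀ Z₁ : Matrix (Fin n) (Fin n) ℝ}
    (hupd : p • (Z₁ * mpow (regGram Z₀ μ) (p / 2 - 1)) +
      (lam * q) • (Xᵀ * ((X * Z₁ - X) *
        diagonal fun i => regResidualSq X Z₀ μ i ^ (q / 2 - 1))) = 0)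
    (hJ : smoothJ X lam p q Z₀ μ ≤ D) (hθp : θ ≤ D ^ ((p - 2) / p))
    (hθq : θ ≤ (D / lam) ^ ((q - 2) / q)) :
    θ / 2 * (p * (∑ i, ∑ j, ((Z₀ - Z₁) i j) ^ 2) +
        lam * q * (∑ i, ∑ j, ((X * (Z₀ - Z₁)) i j) ^ 2)) ≤
      smoothJ X lam p q Z₀ μ - smoothJ X lam p q Z₁ μ := by
  have hA := regGram_posDef hμ Z₀
  have hspec := trace_mpow_regGram_sub_ge hμ (s := p / 2) (by linarith) (by linarith) Z₀ Z₁
  have hres :=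
    sum_regResidualSq_rpow_sub_ge X hμ (s := q / 2) (by linarith) (by linarith) Z₀ Z₁
  set Δ := Z₀ - Z₁
  set M := mpow (regGram Z₀ μ) (p / 2 - 1)
  set N := diagonal fun i => regResidualSq X Z₀ μ i ^ (q / 2 - 1)
  -- the update equation, paired with `Δ`, is the sum of the cross terms of `hspec` and `hres`
  have hstat : p * ((Z₁ * M)ᵀ * Δ).trace +
      lam * q * ((Xᵀ * ((X * Z₁ - X) * N))ᵀ * Δ).trace = 0 := by
    simpa only [transpose_add, transpose_smul, Matrix.add_mul, Matrix.smul_mul, trace_add,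
      trace_smul, smul_eq_mul, transpose_zero, Matrix.zero_mul, trace_zero]
      using congrArg (fun P => (Pᵀ * Δ).trace) hupd
  have hM : θ * (Δᵀ * Δ).trace ≤ (Δᵀ * Δ * M).trace := by
    rw [show M = _ from hA.isHermitian.mpow_eq _]
    exact hA.isHermitian.mul_trace_le_trace_mul_cfc (posSemidef_transpose_mul_self Δ)
      (le_rpow_eigenvalues_regGram X hlam.le hμ hp0 hp2 hJ hθp)
  have hN : θ * ((X * Δ)ᵀ * (X * Δ)).trace ≤ ((X * Δ)ᵀ * (X * Δ) * N).trace :=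
    mul_trace_le_trace_mul_diagonal (posSemidef_transpose_mul_self _)
      (le_regResidualSq_rpow X hlam hμ hq0 hq2 hJ hθq)
  rw [smoothJ_eq, smoothJ_eq, ← trace_transpose_mul_self, ← trace_transpose_mul_self]
  have := mul_le_mul_of_nonneg_left hres hlam.le
  have := mul_le_mul_of_nonneg_left hM hp0.le
  have := mul_le_mul_of_nonneg_left hN (by positivity : 0 ≤ lam * q)
  linarith

end LRR

/-- Sufficient decrease: if the sequence `(Z_t)` satisfies the IRLS update equation for every
`t`, then with `D = J(Z_1, μ)` and `θ = min{D^{(p−2)/p}, (D/λ)^{(q−2)/q}} > 0` we have, for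
every `t`, `J(Z_t, μ) − J(Z_{t+1}, μ) ≥ (θ/2)·(p‖Z_t − Z_{t+1}‖_F² + λq‖X(Z_t − Z_{t+1})‖_F²)`
(Frobenius norms written as sums of squared entries). -/
theorem stmt_15 {d n : ℕ} (hn : 1 ≤ n) (X : Matrix (Fin d) (Fin n) ℝ) (lam p q μ : ℝ)
    (hlam : 0 < lam) (hμ : 0 < μ) (hp0 : 0 < p) (hp2 : p < 2) (hq0 : 0 < q) (hq2 : q < 2)
    (Z : ℕ → Matrix (Fin n) (Fin n) ℝ)
    (hupd : ∀ t, p • (Z (t + 1) *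
        mpow ((Z t)ᵀ * Z t + μ ^ 2 • (1 : Matrix (Fin n) (Fin n) ℝ)) (p / 2 - 1)) +
      (lam * q) • (Xᵀ * ((X * Z (t + 1) - X) *
        Matrix.diagonal fun i => (∑ j, ((X * Z t - X) j i) ^ 2 + μ ^ 2) ^ (q / 2 - 1))) = 0)
    (D θ : ℝ) (hD : D = smoothJ X lam p q (Z 0) μ)
    (hθ : θ = min (D ^ ((p - 2) / p)) ((D / lam) ^ ((q - 2) / q))) :
    0 < θ ∧ ∀ t,
      θ / 2 * (p * (∑ i, ∑ j, ((Z t - Z (t + 1)) i j) ^ 2) +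
          lam * q * (∑ i, ∑ j, ((X * (Z t - Z (t + 1))) i j) ^ 2)) ≤
        smoothJ X lam p q (Z t) μ - smoothJ X lam p q (Z (t + 1)) μ := by
  have hD0 : 0 < D := hD ▸ smoothJ_pos X hn hlam hμ.ne' p q (Z 0)
  have hθ0 : 0 < θ := hθ ▸ lt_min (Real.rpow_pos_of_pos hD0 _)
    (Real.rpow_pos_of_pos (div_pos hD0 hlam) _)
  have hdecrease : ∀ t, smoothJ X lam p q (Z t) μ ≤ D →
      θ / 2 * (p * (∑ i, ∑ j, ((Z t - Z (t + 1)) i j) ^ 2) +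
          lam * q * (∑ i, ∑ j, ((X * (Z t - Z (t + 1))) i j) ^ 2)) ≤
        smoothJ X lam p q (Z t) μ - smoothJ X lam p q (Z (t + 1)) μ := fun t hJ =>
    smoothJ_sub_smoothJ_ge X hlam hμ.ne' hp0 hp2.le hq0 hq2.le (hupd t) hJ
      (hθ ▸ min_le_left _ _) (hθ ▸ min_le_right _ _)
  have hbounded : ∀ t, smoothJ X lam p q (Z t) μ ≤ D := by
    intro t
    induction t with
    | zero => exact hD.ge
    | succ t ih =>
      have := hdecrease t ih
      have : 0 ≤ θ / 2 * (p * (∑ i, ∑ j, ((Z t - Z (t + 1)) i j) ^ 2) +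
          lam * q * (∑ i, ∑ j, ((X * (Z t - Z (t + 1))) i j) ^ 2)) := by positivity
      linarith
  exact ⟨hθ0, fun t => hdecrease t (hbounded t)⟩
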